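/- For any graph G of order n and size m, 2·L₂(G)·χ_{×2}(G)² − 2·L₂(G)·χ_{×2}(G) + n − 2m ≥ 0; equivalently χ_{×2}(G) ≥ (1 + √(1 + (4m−2n)/L₂(G)))/2. -/

import Mathlib

open SimpleGraph

/-- The closed neighborhood `N[v]` of a vertex. -/
def closedNbhd {V : Type*} (G : SimpleGraph V) (v : V) : Set V :=
  insert v (G.neighborSet v)

/-- `B` is a `k`-limited packing: every closed neighborhood contains at most `k` vertices of `B`. -/
def IsLimitedPacking {V : Type*} (G : SimpleGraph V) (k : ℕ) (B : Set V) : Prop :=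
  ∀ v : V, (B ∩ closedNbhd G v).ncard ≤ k

/-- `P` is a partition of the vertex set of `G` into `k`-limited packing sets. -/
def IsLPPartition {V : Type*} (G : SimpleGraph V) (k : ℕ) (P : Finset (Set V)) : Prop :=
  (∀ B ∈ P, IsLimitedPacking G k B) ∧ (∀ v : V, ∃! B : Set V, B ∈ P ∧ v ∈ B)

/-- The `k`-limited packing partition number `χ_{×k}(G)`: minimum number of parts in a
partition of the vertex set into `k`-limited packing sets. -/
noncomputable def chiLP {V : Type*} (G : SimpleGraph V) (k : ℕ) : ℕ :=
  sInf {n | ∃ P : Finset (Set V), IsLPPartition G k P ∧ P.card = n}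

/-- The `2`-limited packing number `L₂(G)`: maximum size of a `2`-limited packing. -/
noncomputable def L2 {V : Type*} (G : SimpleGraph V) : ℕ :=
  sSup {n | ∃ B : Set V, IsLimitedPacking G 2 B ∧ B.ncard = n}

/-!
A minimum partition into `χ` many 2-limited packings has parts of size at most `L₂`, so
`n ≤ χ L₂`. Double counting the pairs `(u, v)` with `u ∈ B` and `v ∈ N[u]` shows
`∑_{u ∈ B} (deg u + 1) ≤ 2n` for each part `B`; summing over the parts gives
`2m + n ≤ 2nχ`. Then `2L₂χ² − 2L₂χ + n − 2m ≥ 2(χ − 1)(χL₂ − n) ≥ 0`.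
-/

open Finset

section

variable {V : Type*} {G : SimpleGraph V} {k : ℕ}

theorem mem_closedNbhd_comm {u v : V} : v ∈ closedNbhd G u ↔ u ∈ closedNbhd G v := by
  simp only [closedNbhd, Set.mem_insert_iff, mem_neighborSet, eq_comm, G.adj_comm]

theorem ncard_closedNbhd [Fintype V] [DecidableRel G.Adj] (v : V) :
    (closedNbhd G v).ncard = G.degree v + 1 := by
  rw [closedNbhd, Set.ncard_insert_of_notMem (by simp), Set.ncard_eq_toFinset_card',
    ← card_neighborSet_eq_degree, Set.toFinset_card]

theorem IsLimitedPacking.ncard_le_L2 [Finite V] {B : Set V} (hB : IsLimitedPacking G 2 B) :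
    B.ncard ≤ L2 G :=
  le_csSup ⟨Nat.card V, by rintro _ ⟨C, -, rfl⟩; exact Set.ncard_le_card C⟩ ⟨B, hB, rfl⟩

open scoped Classical in
theorem IsLimitedPacking.sum_degree_add_one_le [Fintype V] [DecidableRel G.Adj] {B : Set V}
    (hB : IsLimitedPacking G k B) :
    ∑ u ∈ B.toFinset, (G.degree u + 1) ≤ k * Fintype.card V := by
  have hdouble := sum_card_bipartiteAbove_eq_sum_card_bipartiteBelow
    (s := B.toFinset) (t := univ) (r := fun u v => v ∈ closedNbhd G u)
  calc ∑ u ∈ B.toFinset, (G.degree u + 1)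
      = ∑ v, (B ∩ closedNbhd G v).ncard := by
        convert hdouble using 2 with u - v
        · rw [← ncard_closedNbhd, Set.ncard_eq_toFinset_card', bipartiteAbove]
          congr 1
          ext; simp
        · rw [Set.ncard_eq_toFinset_card', bipartiteBelow]
          congr 1
          ext; simp [mem_closedNbhd_comm (u := v)]
    _ ≤ ∑ _v : V, k := sum_le_sum fun v _ => hB v
    _ = k * Fintype.card V := by rw [sum_const, card_univ, smul_eq_mul, mul_comm]

theorem isLPPartition_singletons [Fintype V] (hk : 1 ≤ k) :
    IsLPPartition G k (univ.map ⟨fun v => {v}, Set.singleton_injective⟩) := by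
  refine ⟨?_, fun v => ⟨{v}, by simp, ?_⟩⟩
  · simp only [mem_map, mem_univ, true_and, Function.Embedding.coeFn_mk]
    rintro _ ⟨u, rfl⟩ w
    exact (Set.ncard_le_ncard Set.inter_subset_left).trans (by simpa using hk)
  · simp +contextual [eq_comm]

theorem exists_isLPPartition_card_eq_chiLP [Fintype V] (hk : 1 ≤ k) :
    ∃ P, IsLPPartition G k P ∧ P.card = chiLP G k :=
  Nat.sInf_mem (s := {n | ∃ P, IsLPPartition G k P ∧ P.card = n})
    ⟨_, _, isLPPartition_singletons hk, rfl⟩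

namespace IsLPPartition

variable [Fintype V] {P : Finset (Set V)}

open scoped Classical in
theorem sum_sum_toFinset {M : Type*} [AddCommMonoid M] (hP : IsLPPartition G k P) (f : V → M) :
    ∑ B ∈ P, ∑ u ∈ B.toFinset, f u = ∑ u, f u := by
  rw [← sum_biUnion]
  · congr
    ext u
    simpa using (hP.2 u).exists
  · intro B hB C hC hBC
    refine disjoint_left.2 fun u huB huC =>
      hBC ((hP.2 u).unique ⟨hB, Set.mem_toFinset.1 huB⟩ ⟨hC, Set.mem_toFinset.1 huC⟩)

theorem card_le_card_mul_L2 (hP : IsLPPartition G 2 P) : Fintype.card V ≤ P.card * L2 G := by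
  classical
  calc Fintype.card V = ∑ B ∈ P, B.toFinset.card := by
        simpa only [card_eq_sum_ones, ← card_univ] using (hP.sum_sum_toFinset fun _ => 1).symm
    _ ≤ ∑ _B ∈ P, L2 G := sum_le_sum fun B hB => by
        rw [← Set.ncard_eq_toFinset_card']
        exact (hP.1 B hB).ncard_le_L2
    _ = P.card * L2 G := by rw [sum_const, smul_eq_mul]

theorem two_mul_card_edgeFinset_add_card_le [DecidableRel G.Adj] [Fintype G.edgeSet]
    (hP : IsLPPartition G k P) :
    2 * #G.edgeFinset + Fintype.card V ≤ k * Fintype.card V * P.card := by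
  classical
  calc 2 * #G.edgeFinset + Fintype.card V = ∑ u, (G.degree u + 1) := by
        rw [sum_add_distrib, sum_degrees_eq_twice_card_edges, sum_const, card_univ, smul_eq_mul,
          mul_one]
        congr!
    _ = ∑ B ∈ P, ∑ u ∈ B.toFinset, (G.degree u + 1) := (hP.sum_sum_toFinset _).symm
    _ ≤ ∑ _B ∈ P, k * Fintype.card V := sum_le_sum fun B hB => (hP.1 B hB).sum_degree_add_one_le
    _ = k * Fintype.card V * P.card := by rw [sum_const, smul_eq_mul, mul_comm]

end IsLPPartition

end

theorem L2_chiLP_quadratic_general {V : Type*} [Fintype V] [DecidableEq V]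
    (G : SimpleGraph V) [DecidableRel G.Adj] :
    (0 : ℤ) ≤ 2 * L2 G * (chiLP G 2) ^ 2 - 2 * L2 G * chiLP G 2
      + Fintype.card V - 2 * G.edgeFinset.card := by
  obtain ⟨P, hP, hPcard⟩ := exists_isLPPartition_card_eq_chiLP (G := G) one_le_two
  have hn : (Fintype.card V : ℤ) ≤ chiLP G 2 * L2 G := by
    exact_mod_cast hPcard ▸ hP.card_le_card_mul_L2
  have hm : (2 * #G.edgeFinset + Fintype.card V : ℤ) ≤ 2 * Fintype.card V * chiLP G 2 := by
    exact_mod_cast hPcard ▸ hP.two_mul_card_edgeFinset_add_card_le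
  -- `(χ - 1)(χ L₂ - n) ≥ 0` also when `χ = 0`, since then `n = 0`
  have hprod : (0 : ℤ) ≤ (chiLP G 2 - 1) * (chiLP G 2 * L2 G - Fintype.card V) := by
    rcases Nat.eq_zero_or_pos (chiLP G 2) with h0 | hpos
    · simp only [h0, Nat.cast_zero, zero_mul] at hn ⊢
      nlinarith
    · exact mul_nonneg (by omega) (sub_nonneg.2 hn)
  nlinarith

/-- For a graph `G` of order `n` and size `m`,
`2·L₂(G)·χ_{×2}(G)² − 2·L₂(G)·χ_{×2}(G) + n − 2m ≥ 0`. -/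
theorem L2_chiLP_quadratic {V : Type*} [Fintype V] [DecidableEq V] [Nonempty V]
    (G : SimpleGraph V) [DecidableRel G.Adj] :
    (0 : ℤ) ≤ 2 * L2 G * (chiLP G 2) ^ 2 - 2 * L2 G * chiLP G 2
      + Fintype.card V - 2 * G.edgeFinset.card :=
  L2_chiLP_quadratic_general G
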